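/- arXiv:2307.13080 — 2 statements merged into one kernel-verified Lean document; each statement's English description precedes it below -/
import Mathlib

section
/- Let s₀ be a global state of n robots whose visibility graph is connected, and let s₀, s₁, s₂, … be the synchronous execution of the GSGS algorithm (s_{t+1} is obtained from s_t by the synchronous step if some vertex satisfies Impedensable-GSGS in s_t, and s_{t+1}=s_t otherwise). Then for every t ≥ 2n, all n robots occupy the single vertex Q(s₀) = (c(s₀)−d(s₀), d(s₀)) in s_t; in particular, the GSGS algorithm gathers the robots within 2n rounds, at the point of intersection of the bottom l2r slant and the bottom r2l slant of the initial state, and this gathering point is uniquely determined by the initial global state. -/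
open scoped Classical

namespace GSGS

/-- Vertices of the infinite triangular grid, coordinatized by ℤ × ℤ. -/
abbrev V : Type := ℤ × ℤ

/-- down neighbour -/
def v1 (i : V) : V := (i.1, i.2 - 1)
/-- up neighbour -/
def v4 (i : V) : V := (i.1, i.2 + 1)
/-- down-left neighbour -/
def v2l (i : V) : V := (i.1 - 1, i.2)
/-- down-right neighbour -/
def v2r (i : V) : V := (i.1 + 1, i.2 - 1)
/-- up-left neighbour -/
def v3l (i : V) : V := (i.1 - 1, i.2 + 1)
/-- up-right neighbour -/
def v3r (i : V) : V := (i.1 + 1, i.2)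

/-- Adjacency on the triangular grid. -/
def Adj (a b : V) : Prop :=
  b = v1 a ∨ b = v2l a ∨ b = v2r a ∨ b = v3l a ∨ b = v3r a ∨ b = v4 a

/-- y-coordinate of a vertex (p,q) is q + p/2. -/
def yC (v : V) : ℚ := (v.2 : ℚ) + (v.1 : ℚ) / 2

/-- A global state of n robots is a function `Fin n → V`; a vertex is occupied
iff some robot is at it. -/
def Occ {n : ℕ} (s : Fin n → V) (x : V) : Prop := ∃ r, s r = x

/-- Only-At(i, L): the occupied neighbours of i are exactly those in L. -/
def OnlyAt (occ : V → Prop) (i : V) (L : Set V) : Prop :=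
  ∀ j, Adj i j → (occ j ↔ j ∈ L)

def Extreme (occ : V → Prop) (i : V) : Prop :=
  ¬ occ (v4 i) ∧ ((occ (v2r i) ∨ occ (v3r i)) → (¬ occ (v2l i) ∧ ¬ occ (v3l i)))

def Terminating (occ : V → Prop) (i : V) : Prop :=
  Extreme occ i ∧ ∀ j, Adj i j → ¬ occ j

def Staying (occ : V → Prop) (i : V) : Prop :=
  Extreme occ i ∧
    (OnlyAt occ i {v3r i} ∨ OnlyAt occ i {v3l i} ∨
     OnlyAt occ i {v1 i, v3r i} ∨ OnlyAt occ i {v1 i, v3l i})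

def Downward (occ : V → Prop) (i : V) : Prop :=
  Extreme occ i ∧ occ (v1 i) ∧ ¬ occ (v3r i) ∧ ¬ occ (v3l i)

def DownslantRight (occ : V → Prop) (i : V) : Prop :=
  Extreme occ i ∧ ¬ Downward occ i ∧ ¬ Staying occ i ∧ ¬ Terminating occ i ∧ occ (v2r i)

def DownslantLeft (occ : V → Prop) (i : V) : Prop :=
  Extreme occ i ∧ ¬ Downward occ i ∧ ¬ Staying occ i ∧ ¬ Terminating occ i ∧ occ (v2l i)

def NonExtreme (occ : V → Prop) (i : V) : Prop :=
  ¬ Extreme occ i ∧ occ (v2r i) ∧ occ (v2l i) ∧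
    ¬ occ (v3r i) ∧ ¬ occ (v3l i) ∧ ¬ occ (v4 i)

def Impedensable (occ : V → Prop) (i : V) : Prop :=
  Downward occ i ∨ DownslantRight occ i ∨ DownslantLeft occ i ∨ NonExtreme occ i

/-- The prescribed target of an impedensable robot under the GSGS algorithm:
v₂^r(i) if Downslant-Right(i), v₂^ℓ(i) if Downslant-Left(i), and v₁(i) in the
Downward / Non-Extreme cases. -/
noncomputable def target (occ : V → Prop) (i : V) : V :=
  if DownslantRight occ i then v2r i
  else if DownslantLeft occ i then v2l i
  else v1 i

/-- A step of the GSGS algorithm: a nonempty set M of robots at impedensable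
vertices simultaneously move to their prescribed targets; all others stay. -/
def Step {n : ℕ} (s s' : Fin n → V) : Prop :=
  ∃ M : Set (Fin n), M.Nonempty ∧
    (∀ r ∈ M, Impedensable (Occ s) (s r)) ∧
    ∀ r, s' r = if r ∈ M then target (Occ s) (s r) else s r

/-- The synchronous step: every robot at an impedensable vertex moves. -/
def SyncStep {n : ℕ} (s s' : Fin n → V) : Prop :=
  ∀ r, s' r = if Impedensable (Occ s) (s r) then target (Occ s) (s r) else s r

/-- Connectivity of the visibility graph induced on the occupied vertices. -/
def ConnectedOcc (occ : V → Prop) : Prop :=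
  ∀ a b, occ a → occ b →
    Relation.ReflTransGen (fun x y => occ x ∧ occ y ∧ Adj x y) a b

/-- Minimum of f over the occupied vertices. -/
noncomputable def minVal {n : ℕ} {α : Type*} [LinearOrder α]
    (s : Fin n → V) (f : V → α) (hn : Nonempty (Fin n)) : α :=
  (Finset.image (fun r => f (s r)) Finset.univ).min'
    ((Finset.univ_nonempty_iff.mpr hn).image _)

/-- Maximum of f over the occupied vertices. -/
noncomputable def maxVal {n : ℕ} {α : Type*} [LinearOrder α]
    (s : Fin n → V) (f : V → α) (hn : Nonempty (Fin n)) : α :=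
  (Finset.image (fun r => f (s r)) Finset.univ).max'
    ((Finset.univ_nonempty_iff.mpr hn).image _)

/-- Algorithm II guards. -/
def DownwardII (occ : V → Prop) (i : V) : Prop :=
  (occ (v1 i) ∧ ¬ occ (v3l i) ∧ ¬ occ (v4 i) ∧ ¬ occ (v3r i)) ∨
    OnlyAt occ i {v2l i, v2r i}

def DownslantLeftII (occ : V → Prop) (i : V) : Prop := OnlyAt occ i {v2l i}

def DownslantRightII (occ : V → Prop) (i : V) : Prop := OnlyAt occ i {v2r i}

def IIEnabled (occ : V → Prop) (i : V) : Prop :=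
  DownwardII occ i ∨ DownslantRightII occ i ∨ DownslantLeftII occ i

/-- The prescribed target under Algorithm II. -/
noncomputable def targetII (occ : V → Prop) (i : V) : V :=
  if DownslantRightII occ i then v2r i
  else if DownslantLeftII occ i then v2l i
  else v1 i

/-- The synchronous step of Algorithm II. -/
def SyncStepII {n : ℕ} (s s' : Fin n → V) : Prop :=
  ∀ r, s' r = if IIEnabled (Occ s) (s r) then targetII (Occ s) (s r) else s r

section AuxGSGS

variable {occ : V → Prop} {i x y : V}

lemma adj_symm (h : Adj x y) : Adj y x := by
  rcases x with ⟨p, q⟩; rcases y with ⟨p', q'⟩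
  simp only [Adj, v1, v2l, v2r, v3l, v3r, v4, Prod.mk.injEq, Prod.ext_iff] at h ⊢
  omega

/-- The deterministic motion of a vertex under the synchronous GSGS step. -/
noncomputable def move (occ : V → Prop) (i : V) : V :=
  if Impedensable occ i then target occ i else i

lemma syncStep_eq_move {n : ℕ} {s s' : Fin n → V} (h : SyncStep s s') (r : Fin n) :
    s' r = move (Occ s) (s r) := h r

lemma not_imped_of_v4 (h : occ (v4 i)) : ¬ Impedensable occ i := by
  rintro (⟨⟨h4, _⟩, _⟩ | ⟨⟨h4, _⟩, _⟩ | ⟨⟨h4, _⟩, _⟩ | ⟨_, _, _, _, _, h4⟩) <;> exact h4 h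

lemma move_of_v4 (h : occ (v4 i)) : move occ i = i := if_neg (not_imped_of_v4 h)

lemma not_dsl_of_v2r (h : occ (v2r i)) : ¬ DownslantLeft occ i :=
  fun ⟨hex, _, _, _, hl⟩ => (hex.2 (Or.inl h)).1 hl

lemma not_dsr_of_v2l (h : occ (v2l i)) : ¬ DownslantRight occ i :=
  fun ⟨hex, _, _, _, hr⟩ => (hex.2 (Or.inl hr)).1 h

lemma not_dsr_of_v3l (h : occ (v3l i)) : ¬ DownslantRight occ i :=
  fun ⟨hex, _, _, _, hr⟩ => (hex.2 (Or.inl hr)).2 h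

lemma not_dsl_of_v3r (h : occ (v3r i)) : ¬ DownslantLeft occ i :=
  fun ⟨hex, _, _, _, hl⟩ => (hex.2 (Or.inr h)).1 hl

/-- Hub lemma: the four possible behaviours of a vertex. -/
lemma move_cases (occ : V → Prop) (i : V) :
    (¬ Impedensable occ i ∧ move occ i = i) ∨
    (DownslantRight occ i ∧ move occ i = v2r i) ∨
    (DownslantLeft occ i ∧ move occ i = v2l i) ∨
    ((Downward occ i ∨ NonExtreme occ i) ∧ move occ i = v1 i) := by
  by_cases hI : Impedensable occ i
  · by_cases hR : DownslantRight occ i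
    · exact Or.inr (Or.inl ⟨hR, by rw [move, if_pos hI, target, if_pos hR]⟩)
    · by_cases hL : DownslantLeft occ i
      · exact Or.inr (Or.inr (Or.inl ⟨hL, by rw [move, if_pos hI, target, if_neg hR, if_pos hL]⟩))
      · refine Or.inr (Or.inr (Or.inr ⟨?_, by rw [move, if_pos hI, target, if_neg hR, if_neg hL]⟩))
        rcases hI with h | h | h | h
        · exact Or.inl h
        · exact absurd h hR
        · exact absurd h hL
        · exact Or.inr h
  · exact Or.inl ⟨hI, if_neg hI⟩

lemma move_of_v3r (h : occ (v3r i)) : move occ i = i ∨ move occ i = v2r i := by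
  rcases move_cases occ i with ⟨_, hm⟩ | ⟨_, hm⟩ | ⟨hg, hm⟩ | ⟨hg, hm⟩
  · exact Or.inl hm
  · exact Or.inr hm
  · exact absurd hg (not_dsl_of_v3r h)
  · rcases hg with hg | hg
    · exact absurd h hg.2.2.1
    · exact absurd h hg.2.2.2.1

lemma move_of_v3l (h : occ (v3l i)) : move occ i = i ∨ move occ i = v2l i := by
  rcases move_cases occ i with ⟨_, hm⟩ | ⟨hg, hm⟩ | ⟨_, hm⟩ | ⟨hg, hm⟩
  · exact Or.inl hm
  · exact absurd hg (not_dsr_of_v3l h)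
  · exact Or.inr hm
  · rcases hg with hg | hg
    · exact absurd h hg.2.2.2
    · exact absurd h hg.2.2.2.2.1

lemma move_of_v2l (h : occ (v2l i)) :
    move occ i = i ∨ move occ i = v2l i ∨ move occ i = v1 i := by
  rcases move_cases occ i with ⟨_, hm⟩ | ⟨hg, hm⟩ | ⟨_, hm⟩ | ⟨_, hm⟩
  · exact Or.inl hm
  · exact absurd hg (not_dsr_of_v2l h)
  · exact Or.inr (Or.inl hm)
  · exact Or.inr (Or.inr hm)

lemma move_of_v2r (h : occ (v2r i)) :
    move occ i = i ∨ move occ i = v2r i ∨ move occ i = v1 i := by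
  rcases move_cases occ i with ⟨_, hm⟩ | ⟨_, hm⟩ | ⟨hg, hm⟩ | ⟨_, hm⟩
  · exact Or.inl hm
  · exact Or.inr (Or.inl hm)
  · exact absurd hg (not_dsl_of_v2r h)
  · exact Or.inr (Or.inr hm)

lemma move_mem (occ : V → Prop) (i : V) :
    move occ i = i ∨ move occ i = v1 i ∨ move occ i = v2l i ∨ move occ i = v2r i := by
  rcases move_cases occ i with ⟨_, hm⟩ | ⟨_, hm⟩ | ⟨_, hm⟩ | ⟨_, hm⟩ <;> tauto

end AuxGSGS

section AuxGSGS2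

variable {occ : V → Prop}

lemma v4_v1 (x : V) : v4 (v1 x) = x := by simp [v4, v1]
lemma v1_v4 (x : V) : v1 (v4 x) = x := by simp [v4, v1]
lemma v3r_v2l (x : V) : v3r (v2l x) = x := by simp [v3r, v2l]
lemma v2l_v3r (x : V) : v2l (v3r x) = x := by simp [v3r, v2l]
lemma v3l_v2r (x : V) : v3l (v2r x) = x := by simp [v3l, v2r]
lemma v2r_v3l (x : V) : v2r (v3l x) = x := by simp [v3l, v2r]

/-- Key edge lemma: images of adjacent occupied vertices are equal or adjacent. -/
lemma move_adj {x y : V} (hx : occ x) (hy : occ y) (hadj : Adj x y) :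
    move occ x = move occ y ∨ Adj (move occ x) (move occ y) := by
  have hfin : ∀ a b : V, (a = b ∨ Adj a b) → a = b ∨ Adj a b := fun _ _ h => h
  rcases hadj with h | h | h | h | h | h <;> subst h
  · -- y = v1 x : the lower robot sees x above, stays
    have hy4 : occ (v4 (v1 x)) := by rw [v4_v1]; exact hx
    rw [move_of_v4 hy4]
    rcases move_mem occ x with hm | hm | hm | hm <;> rw [hm] <;>
      [skip; skip; skip; skip] <;>
      simp only [Adj, v1, v2l, v2r, v3l, v3r, v4, Prod.mk.injEq, Prod.ext_iff, and_true, true_and, or_true, true_or] <;> omega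
  · -- y = v2l x
    have h1 : occ (v3r (v2l x)) := by rw [v3r_v2l]; exact hx
    rcases move_of_v3r h1 with hm | hm <;>
      rcases move_of_v2l hy with hm' | hm' | hm' <;> rw [hm, hm'] <;>
      simp only [Adj, v1, v2l, v2r, v3l, v3r, v4, Prod.mk.injEq, Prod.ext_iff, and_true, true_and, or_true, true_or] <;> omega
  · -- y = v2r x
    have h1 : occ (v3l (v2r x)) := by rw [v3l_v2r]; exact hx
    rcases move_of_v3l h1 with hm | hm <;>
      rcases move_of_v2r hy with hm' | hm' | hm' <;> rw [hm, hm'] <;>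
      simp only [Adj, v1, v2l, v2r, v3l, v3r, v4, Prod.mk.injEq, Prod.ext_iff, and_true, true_and, or_true, true_or] <;> omega
  · -- y = v3l x
    have h1 : occ (v2r (v3l x)) := by rw [v2r_v3l]; exact hx
    rcases move_of_v2r h1 with hm | hm | hm <;>
      rcases move_of_v3l hy with hm' | hm' <;> rw [hm, hm'] <;>
      simp only [Adj, v1, v2l, v2r, v3l, v3r, v4, Prod.mk.injEq, Prod.ext_iff, and_true, true_and, or_true, true_or] <;> omega
  · -- y = v3r x
    have h1 : occ (v2l (v3r x)) := by rw [v2l_v3r]; exact hx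
    rcases move_of_v2l h1 with hm | hm | hm <;>
      rcases move_of_v3r hy with hm' | hm' <;> rw [hm, hm'] <;>
      simp only [Adj, v1, v2l, v2r, v3l, v3r, v4, Prod.mk.injEq, Prod.ext_iff, and_true, true_and, or_true, true_or] <;> omega
  · -- y = v4 x : x sees y above, stays
    rw [move_of_v4 hy]
    rcases move_mem occ (v4 x) with hm | hm | hm | hm <;> rw [hm] <;>
      simp only [Adj, v1, v2l, v2r, v3l, v3r, v4, Prod.mk.injEq, Prod.ext_iff, and_true, true_and, or_true, true_or] <;> omega

lemma occ_move_of_occ {n : ℕ} {s s' : Fin n → V} (h : SyncStep s s') {x : V}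
    (hx : Occ s x) : Occ s' (move (Occ s) x) := by
  obtain ⟨r, hr⟩ := hx
  exact ⟨r, by rw [syncStep_eq_move h r, hr]⟩

lemma conn_step {n : ℕ} {s s' : Fin n → V} (h : SyncStep s s')
    (hc : ConnectedOcc (Occ s)) : ConnectedOcc (Occ s') := by
  have key : ∀ x y : V, Relation.ReflTransGen (fun a b => Occ s a ∧ Occ s b ∧ Adj a b) x y →
      Relation.ReflTransGen (fun a b => Occ s' a ∧ Occ s' b ∧ Adj a b)
        (move (Occ s) x) (move (Occ s) y) := by
    intro x y hxy
    induction hxy with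
    | refl => exact Relation.ReflTransGen.refl
    | tail _ hbc ih =>
        obtain ⟨hob, hoc, hadj⟩ := hbc
        rcases move_adj hob hoc hadj with heq | hadj'
        · rwa [← heq]
        · exact ih.tail ⟨occ_move_of_occ h hob, occ_move_of_occ h hoc, hadj'⟩
  intro a b ha hb
  obtain ⟨ra, hra⟩ := ha
  obtain ⟨rb, hrb⟩ := hb
  have ea : a = move (Occ s) (s ra) := by rw [← hra, syncStep_eq_move h ra]
  have eb : b = move (Occ s) (s rb) := by rw [← hrb, syncStep_eq_move h rb]
  rw [ea, eb]
  exact key _ _ (hc _ _ ⟨ra, rfl⟩ ⟨rb, rfl⟩)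

end AuxGSGS2

section AuxGSGS3

variable {n : ℕ} {s s' : Fin n → V} {hn : Nonempty (Fin n)}

lemma minVal_le (s : Fin n → V) (f : V → ℤ) (hn : Nonempty (Fin n)) (r : Fin n) :
    minVal s f hn ≤ f (s r) :=
  Finset.min'_le _ _ (Finset.mem_image_of_mem _ (Finset.mem_univ r))

lemma le_minVal (s : Fin n → V) (f : V → ℤ) (hn : Nonempty (Fin n)) {a : ℤ}
    (h : ∀ r, a ≤ f (s r)) : a ≤ minVal s f hn := by
  apply Finset.le_min'
  intro b hb
  obtain ⟨r, -, hr⟩ := Finset.mem_image.mp hb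
  exact hr ▸ h r

lemma exists_minVal (s : Fin n → V) (f : V → ℤ) (hn : Nonempty (Fin n)) :
    ∃ r, f (s r) = minVal s f hn := by
  obtain ⟨r, -, hr⟩ := Finset.mem_image.mp (Finset.min'_mem
    (Finset.image (fun r => f (s r)) Finset.univ)
    ((Finset.univ_nonempty_iff.mpr hn).image _))
  exact ⟨r, hr⟩

lemma le_maxVal (s : Fin n → V) (f : V → ℤ) (hn : Nonempty (Fin n)) (r : Fin n) :
    f (s r) ≤ maxVal s f hn := by
  apply Finset.le_max'
  exact Finset.mem_image_of_mem _ (Finset.mem_univ r)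

lemma maxVal_le (s : Fin n → V) (f : V → ℤ) (hn : Nonempty (Fin n)) {a : ℤ}
    (h : ∀ r, f (s r) ≤ a) : maxVal s f hn ≤ a := by
  apply Finset.max'_le
  intro b hb
  obtain ⟨r, -, hr⟩ := Finset.mem_image.mp hb
  exact hr ▸ h r

lemma exists_maxVal (s : Fin n → V) (f : V → ℤ) (hn : Nonempty (Fin n)) :
    ∃ r, f (s r) = maxVal s f hn := by
  obtain ⟨r, -, hr⟩ := Finset.mem_image.mp (Finset.max'_mem
    (Finset.image (fun r => f (s r)) Finset.univ)
    ((Finset.univ_nonempty_iff.mpr hn).image _))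
  exact ⟨r, hr⟩

/-- Coordinates weakly decrease under a move. -/
lemma move_coord_le (occ : V → Prop) (i : V) :
    (move occ i).1 + (move occ i).2 ≤ i.1 + i.2 ∧ (move occ i).2 ≤ i.2 ∧
      (move occ i).1 + 2 * (move occ i).2 ≤ i.1 + 2 * i.2 := by
  rcases move_mem occ i with hm | hm | hm | hm <;> rw [hm] <;>
    (try simp only [v1, v2l, v2r]) <;> omega

/-- Lower bounds after a move, witnessed by currently occupied vertices. -/
lemma move_coord_lb {occ : V → Prop} {i : V} (hocc : occ i) :
    (∃ j, occ j ∧ j.1 + j.2 ≤ (move occ i).1 + (move occ i).2) ∧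
      (∃ j, occ j ∧ j.2 ≤ (move occ i).2) := by
  rcases move_cases occ i with ⟨-, hm⟩ | ⟨hg, hm⟩ | ⟨hg, hm⟩ | ⟨hg, hm⟩ <;> rw [hm]
  · exact ⟨⟨i, hocc, le_refl _⟩, ⟨i, hocc, le_refl _⟩⟩
  · -- DSR: target v2r i
    refine ⟨⟨i, hocc, ?_⟩, ⟨v2r i, hg.2.2.2.2, le_refl _⟩⟩
    simp only [v2r]; omega
  · -- DSL: target v2l i
    refine ⟨⟨v2l i, hg.2.2.2.2, le_refl _⟩, ⟨i, hocc, ?_⟩⟩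
    simp only [v2l]; omega
  · -- Downward or NonExtreme: target v1 i
    rcases hg with hg | hg
    · exact ⟨⟨v1 i, hg.2.1, le_refl _⟩, ⟨v1 i, hg.2.1, le_refl _⟩⟩
    · refine ⟨⟨v2l i, hg.2.2.1, ?_⟩, ⟨v2r i, hg.2.1, ?_⟩⟩
      · simp only [v2l, v1]; omega
      · simp only [v2r, v1]; omega

lemma minVal_eq_of_step (h : SyncStep s s') (hn : Nonempty (Fin n)) (f : V → ℤ)
    (hub : ∀ i, f (move (Occ s) i) ≤ f i)
    (hlb : ∀ i, Occ s i → ∃ j, Occ s j ∧ f j ≤ f (move (Occ s) i)) :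
    minVal s' f hn = minVal s f hn := by
  apply le_antisymm
  · obtain ⟨r, hr⟩ := exists_minVal s f hn
    calc minVal s' f hn ≤ f (s' r) := minVal_le s' f hn r
    _ ≤ f (s r) := by rw [syncStep_eq_move h r]; exact hub _
    _ = minVal s f hn := hr
  · apply le_minVal
    intro r
    rw [syncStep_eq_move h r]
    obtain ⟨j, hj, hle⟩ := hlb (s r) ⟨r, rfl⟩
    obtain ⟨r', hr'⟩ := hj
    calc minVal s f hn ≤ f (s r') := minVal_le s f hn r'
    _ = f j := by rw [hr']
    _ ≤ _ := hle

lemma c_invariant (h : SyncStep s s') (hn : Nonempty (Fin n)) :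
    minVal s' (fun v => v.1 + v.2) hn = minVal s (fun v => v.1 + v.2) hn :=
  minVal_eq_of_step h hn _ (fun i => (move_coord_le (Occ s) i).1)
    (fun i hi => (move_coord_lb hi).1)

lemma d_invariant (h : SyncStep s s') (hn : Nonempty (Fin n)) :
    minVal s' Prod.snd hn = minVal s Prod.snd hn :=
  minVal_eq_of_step h hn _ (fun i => (move_coord_le (Occ s) i).2.1)
    (fun i hi => (move_coord_lb hi).2)

/-- A locally maximal (w.r.t. p+2q) occupied vertex with an occupied lower
neighbour is impedensable. -/
lemma imped_of_max {occ : V → Prop} {i : V}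
    (h4 : ¬ occ (v4 i)) (h3r : ¬ occ (v3r i)) (h3l : ¬ occ (v3l i))
    (hnb : occ (v1 i) ∨ occ (v2l i) ∨ occ (v2r i)) : Impedensable occ i := by
  by_cases hE : Extreme occ i
  · by_cases h1 : occ (v1 i)
    · exact Or.inl ⟨hE, h1, h3r, h3l⟩
    · by_cases h2r : occ (v2r i)
      · refine Or.inr (Or.inl ⟨hE, fun hD => h1 hD.2.1, ?_, fun hT => hT.2 _ ?_ h2r, h2r⟩)
        · rintro ⟨-, hS | hS | hS | hS⟩ <;>
            have := (hS (v2r i) (Or.inr (Or.inr (Or.inl rfl)))).mp h2r <;>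
            simp only [Set.mem_insert_iff, Set.mem_singleton_iff, v1, v2r, v3r, v3l,
              Prod.mk.injEq, Prod.ext_iff] at this <;> omega
        · exact Or.inr (Or.inr (Or.inl rfl))
      · have h2l : occ (v2l i) := by tauto
        refine Or.inr (Or.inr (Or.inl ⟨hE, fun hD => h1 hD.2.1, ?_, fun hT => hT.2 _ ?_ h2l, h2l⟩))
        · rintro ⟨-, hS | hS | hS | hS⟩ <;>
            have := (hS (v2l i) (Or.inr (Or.inl rfl))).mp h2l <;>
            simp only [Set.mem_insert_iff, Set.mem_singleton_iff, v1, v2l, v3r, v3l,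
              Prod.mk.injEq, Prod.ext_iff] at this <;> omega
        · exact Or.inr (Or.inl rfl)
  · by_cases h2r : occ (v2r i)
    · by_cases h2l : occ (v2l i)
      · exact Or.inr (Or.inr (Or.inr ⟨hE, h2r, h2l, h3r, h3l, h4⟩))
      · exact absurd ⟨h4, fun _ => ⟨h2l, h3l⟩⟩ hE
    · exact absurd (⟨h4, fun hor => (h3r (hor.resolve_left h2r)).elim⟩ : Extreme occ i) hE

end AuxGSGS3

section AuxGSGS4

variable {n : ℕ} {s s' : Fin n → V}

/-- Progress: the maximum of p+2q drops each synchronous round, unless gathered. -/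
lemma F_step (hconn : ConnectedOcc (Occ s)) (h : SyncStep s s') (hn : Nonempty (Fin n)) :
    maxVal s' (fun v => v.1 + 2 * v.2) hn ≤
      max (minVal s (fun v => v.1 + v.2) hn + minVal s Prod.snd hn)
        (maxVal s (fun v => v.1 + 2 * v.2) hn - 1) := by
  apply maxVal_le
  intro r
  rw [syncStep_eq_move h r]
  have hub := (move_coord_le (Occ s) (s r)).2.2
  by_cases hmax : maxVal s (fun v => v.1 + 2 * v.2) hn ≤ (s r).1 + 2 * (s r).2
  · have hocc_le : ∀ j, Occ s j → j.1 + 2 * j.2 ≤ (s r).1 + 2 * (s r).2 := by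
      rintro j ⟨r', rfl⟩
      exact le_trans (le_maxVal s (fun v => v.1 + 2 * v.2) hn r') hmax
    have h4 : ¬ Occ s (v4 (s r)) := fun hc => by
      have := hocc_le _ hc; simp only [v4] at this; omega
    have h3r : ¬ Occ s (v3r (s r)) := fun hc => by
      have := hocc_le _ hc; simp only [v3r] at this; omega
    have h3l : ¬ Occ s (v3l (s r)) := fun hc => by
      have := hocc_le _ hc; simp only [v3l] at this; omega
    by_cases hnb : Occ s (v1 (s r)) ∨ Occ s (v2l (s r)) ∨ Occ s (v2r (s r))
    · -- the max vertex moves, its value drops by at least one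
      have hI := imped_of_max h4 h3r h3l hnb
      have hdrop : (move (Occ s) (s r)).1 + 2 * (move (Occ s) (s r)).2 ≤
          (s r).1 + 2 * (s r).2 - 1 := by
        rcases move_cases (Occ s) (s r) with ⟨hg, -⟩ | ⟨-, hm⟩ | ⟨-, hm⟩ | ⟨-, hm⟩
        · exact absurd hI hg
        all_goals rw [hm]; simp only [v1, v2l, v2r]; omega
      refine le_trans (le_trans hdrop ?_) (le_max_right _ _)
      have := le_maxVal s (fun v => v.1 + 2 * v.2) hn r
      omega
    · -- the max vertex is isolated: everything is gathered already
      push_neg at hnb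
      obtain ⟨h1, h2l, h2r⟩ := hnb
      have hall : ∀ j, Occ s j → j = s r := by
        intro j hj
        rcases Relation.ReflTransGen.cases_head (hconn (s r) j ⟨r, rfl⟩ hj) with
          rfl | ⟨c, ⟨-, hoc, hadj⟩, -⟩
        · rfl
        · rcases hadj with hh | hh | hh | hh | hh | hh <;> subst hh <;>
            [exact absurd hoc h1; exact absurd hoc h2l; exact absurd hoc h2r;
             exact absurd hoc h3l; exact absurd hoc h3r; exact absurd hoc h4]
      have hminpq : minVal s (fun v => v.1 + v.2) hn = (s r).1 + (s r).2 := by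
        apply le_antisymm (minVal_le s _ hn r)
        apply le_minVal
        intro r'
        rw [hall (s r') ⟨r', rfl⟩]
      have hminq : minVal s Prod.snd hn = (s r).2 := by
        apply le_antisymm (minVal_le s _ hn r)
        apply le_minVal
        intro r'
        rw [hall (s r') ⟨r', rfl⟩]
      refine le_trans ?_ (le_max_left _ _)
      rw [hminpq, hminq]
      omega
  · push_neg at hmax
    refine le_trans ?_ (le_max_right _ _)
    omega

/-- Discrete intermediate value property along a connectivity path. -/
lemma reach_vals {g : V → ℤ} (hstep : ∀ x y : V, Adj x y → g y ≤ g x + 1)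
    {a v : V} (ha : Occ s a)
    (hrt : Relation.ReflTransGen (fun x y => Occ s x ∧ Occ s y ∧ Adj x y) a v) :
    ∀ m, g a ≤ m → m ≤ g v → ∃ z, Occ s z ∧ g z = m := by
  induction hrt with
  | refl => exact fun m h1 h2 => ⟨a, ha, le_antisymm h1 h2⟩
  | @tail b c hab hbc ih =>
      intro m h1 h2
      by_cases hm : m ≤ g b
      · exact ih m h1 hm
      · have := hstep b c hbc.2.2
        exact ⟨c, hbc.2.1, by omega⟩

lemma card_range (s : Fin n → V) (g : V → ℤ) (c M : ℤ)
    (hall : ∀ m, c ≤ m → m ≤ M → ∃ z, Occ s z ∧ g z = m) : M ≤ c + n - 1 := by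
  choose! z hocc hval using hall
  have hsub : ∀ m ∈ Finset.Icc c M, z m ∈ Finset.image s Finset.univ := by
    intro m hm
    rw [Finset.mem_Icc] at hm
    obtain ⟨r, hr⟩ := hocc m hm.1 hm.2
    exact Finset.mem_image.mpr ⟨r, Finset.mem_univ r, hr⟩
  have hinj : Set.InjOn z (Finset.Icc c M) := by
    intro m1 h1 m2 h2 hzeq
    rw [Finset.coe_Icc, Set.mem_Icc] at h1 h2
    rw [← hval m1 h1.1 h1.2, ← hval m2 h2.1 h2.2, hzeq]
  have hcard := Finset.card_le_card_of_injOn z hsub hinj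
  have himg : (Finset.image s Finset.univ).card ≤ n := by
    refine le_trans Finset.card_image_le ?_
    simp
  rw [Int.card_Icc] at hcard
  omega

lemma coord_spread (hconn : ConnectedOcc (Occ s)) (hn : Nonempty (Fin n)) (g : V → ℤ)
    (hstep : ∀ x y : V, Adj x y → g y ≤ g x + 1) (r : Fin n) :
    g (s r) ≤ minVal s g hn + n - 1 := by
  obtain ⟨r0, hr0⟩ := exists_minVal s g hn
  have hall := reach_vals hstep ⟨r0, rfl⟩ (hconn (s r0) (s r) ⟨r0, rfl⟩ ⟨r, rfl⟩)
  rw [hr0] at hall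
  exact card_range s g _ _ hall

lemma pq_step : ∀ x y : V, Adj x y → (y.1 + y.2) ≤ (x.1 + x.2) + 1 := by
  intro x y h
  rcases h with h | h | h | h | h | h <;> subst h <;>
    simp only [v1, v2l, v2r, v3l, v3r, v4] <;> omega

lemma q_step : ∀ x y : V, Adj x y → y.2 ≤ x.2 + 1 := by
  intro x y h
  rcases h with h | h | h | h | h | h <;> subst h <;>
    simp only [v1, v2l, v2r, v3l, v3r, v4] <;> omega

end AuxGSGS4

/-- the synchronous execution of the GSGS algorithm from a
connected state gathers all n robots at Q(s₀) = (c(s₀) - d(s₀), d(s₀)) within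
2n rounds. -/
theorem stmt15 (n : ℕ) (hn : 0 < n) (e : ℕ → Fin n → V)
    (hconn : ConnectedOcc (Occ (e 0)))
    (hexec : ∀ t, SyncStep (e t) (e (t + 1))) :
    ∀ t, 2 * n ≤ t → ∀ r : Fin n,
      e t r =
        (minVal (e 0) (fun v => v.1 + v.2) (Fin.pos_iff_nonempty.mp hn) -
           minVal (e 0) Prod.snd (Fin.pos_iff_nonempty.mp hn),
         minVal (e 0) Prod.snd (Fin.pos_iff_nonempty.mp hn)) := by
  intro t ht r
  set hne := Fin.pos_iff_nonempty.mp hn with hne_def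
  set c0 := minVal (e 0) (fun v => v.1 + v.2) hne with hc0
  set d0 := minVal (e 0) Prod.snd hne with hd0
  -- invariants
  have hc : ∀ u, minVal (e u) (fun v => v.1 + v.2) hne = c0 := by
    intro u
    induction u with
    | zero => rfl
    | succ u ih => rw [c_invariant (hexec u) hne, ih]
  have hd : ∀ u, minVal (e u) Prod.snd hne = d0 := by
    intro u
    induction u with
    | zero => rfl
    | succ u ih => rw [d_invariant (hexec u) hne, ih]
  have hcv : ∀ u, ConnectedOcc (Occ (e u)) := by
    intro u
    induction u with
    | zero => exact hconn
    | succ u ih => exact conn_step (hexec u) ih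
  -- progress
  have hF : ∀ u : ℕ, maxVal (e u) (fun v => v.1 + 2 * v.2) hne ≤
      max (c0 + d0) (maxVal (e 0) (fun v => v.1 + 2 * v.2) hne - u) := by
    intro u
    induction u with
    | zero => simp
    | succ u ih =>
        have hstep := F_step (hcv u) (hexec u) hne
        rw [hc u, hd u] at hstep
        simp only [le_max_iff, max_le_iff] at hstep ih ⊢
        push_cast
        omega
  -- initial spread
  have hspread : maxVal (e 0) (fun v => v.1 + 2 * v.2) hne ≤ c0 + d0 + 2 * n - 2 := by
    apply maxVal_le
    intro r'
    have h1 : (e 0 r').1 + (e 0 r').2 ≤ c0 + n - 1 := by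
      have := coord_spread hconn hne (fun v => v.1 + v.2) pq_step r'
      rw [← hc0] at this
      exact this
    have h2 : (e 0 r').2 ≤ d0 + n - 1 := by
      have := coord_spread hconn hne Prod.snd q_step r'
      rw [← hd0] at this
      exact this
    show (e 0 r').1 + 2 * (e 0 r').2 ≤ _
    omega
  -- conclude
  have h1 : c0 ≤ (e t r).1 + (e t r).2 := by
    have := minVal_le (e t) (fun v => v.1 + v.2) hne r
    rw [hc t] at this
    exact this
  have h2 : d0 ≤ (e t r).2 := by
    have := minVal_le (e t) Prod.snd hne r
    rw [hd t] at this
    exact this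
  have h3 : (e t r).1 + 2 * (e t r).2 ≤ c0 + d0 := by
    have hub := le_maxVal (e t) (fun v => v.1 + 2 * v.2) hne r
    have := hF t
    simp only [le_max_iff] at this
    have hle : (e t r).1 + 2 * (e t r).2 ≤
        max (c0 + d0) (maxVal (e 0) (fun v => v.1 + 2 * v.2) hne - t) := le_trans hub (hF t)
    simp only [le_max_iff] at hle
    omega
  have : (e t r).1 = c0 - d0 ∧ (e t r).2 = d0 := by omega
  exact Prod.ext this.1 this.2

end GSGS
end

section
/- In any global state s, if a vertex i is II-enabled (i.e., Downward-II(i) ∨ Downslant-Right-II(i) ∨ Downslant-Left-II(i) holds), then i satisfies Impedensable-GSGS(i), and the move prescribed to i by Algorithm II coincides with the move prescribed by the GSGS algorithm (Algorithm II is the GSGS algorithm with cases 5 and 6 removed). -/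
open scoped Classical

namespace GSGS

lemma adj1 (i : V) : Adj i (v1 i) := Or.inl rfl
lemma adj2l (i : V) : Adj i (v2l i) := Or.inr (Or.inl rfl)
lemma adj2r (i : V) : Adj i (v2r i) := Or.inr (Or.inr (Or.inl rfl))
lemma adj3l (i : V) : Adj i (v3l i) := Or.inr (Or.inr (Or.inr (Or.inl rfl)))
lemma adj3r (i : V) : Adj i (v3r i) := Or.inr (Or.inr (Or.inr (Or.inr (Or.inl rfl))))
lemma adj4 (i : V) : Adj i (v4 i) := Or.inr (Or.inr (Or.inr (Or.inr (Or.inr rfl))))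

/-- every II-enabled vertex is impedensable under GSGS, and the
move prescribed by Algorithm II coincides with the GSGS move. -/
theorem stmt17 (n : ℕ) (s : Fin n → V) (i : V)
    (h : IIEnabled (Occ s) i) :
    Impedensable (Occ s) i ∧ targetII (Occ s) i = target (Occ s) i := by
  set occ := Occ s with hocc
  clear_value occ
  rcases h with hD | hR | hL
  · -- Downward-II
    have hnRII : ¬ DownslantRightII occ i := by
      rcases hD with ⟨o1, _, _, _⟩ | hOA
      · intro hc
        have := (hc _ (adj1 i)).mp o1
        simp only [Set.mem_singleton_iff, v1, v2r, Prod.mk.injEq] at this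
        omega
      · intro hc
        have o2l : occ (v2l i) := (hOA _ (adj2l i)).mpr (by simp)
        have := (hc _ (adj2l i)).mp o2l
        simp only [Set.mem_singleton_iff, v2l, v2r, Prod.mk.injEq] at this
        omega
    have hnLII : ¬ DownslantLeftII occ i := by
      rcases hD with ⟨o1, _, _, _⟩ | hOA
      · intro hc
        have := (hc _ (adj1 i)).mp o1
        simp only [Set.mem_singleton_iff, v1, v2l, Prod.mk.injEq] at this
        omega
      · intro hc
        have o2r : occ (v2r i) := (hOA _ (adj2r i)).mpr (by simp)
        have := (hc _ (adj2r i)).mp o2r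
        simp only [Set.mem_singleton_iff, v2r, v2l, Prod.mk.injEq] at this
        omega
    rcases hD with ⟨o1, n3l, n4, n3r⟩ | hOA
    · by_cases hE : Extreme occ i
      · have hDw : Downward occ i := ⟨hE, o1, n3r, n3l⟩
        have hnR : ¬ DownslantRight occ i := fun hc => hc.2.1 hDw
        have hnL : ¬ DownslantLeft occ i := fun hc => hc.2.1 hDw
        refine ⟨Or.inl hDw, ?_⟩
        simp [targetII, target, hnR, hnL, hnRII, hnLII]
      · have o2r : occ (v2r i) := by
          by_contra hc
          exact hE ⟨n4, fun hor => (hor.elim hc n3r).elim⟩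
        have o2l : occ (v2l i) := by
          by_contra hc
          exact hE ⟨n4, fun _ => ⟨hc, n3l⟩⟩
        have hNE : NonExtreme occ i := ⟨hE, o2r, o2l, n3r, n3l, n4⟩
        have hnR : ¬ DownslantRight occ i := fun hc => hE hc.1
        have hnL : ¬ DownslantLeft occ i := fun hc => hE hc.1
        refine ⟨Or.inr (Or.inr (Or.inr hNE)), ?_⟩
        simp [targetII, target, hnR, hnL, hnRII, hnLII]
    · have o2l : occ (v2l i) := (hOA _ (adj2l i)).mpr (by simp)
      have o2r : occ (v2r i) := (hOA _ (adj2r i)).mpr (by simp)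
      have n3l : ¬ occ (v3l i) := by
        intro hc
        have := (hOA _ (adj3l i)).mp hc
        simp only [Set.mem_insert_iff, Set.mem_singleton_iff, v3l, v2l, v2r,
          Prod.mk.injEq] at this
        omega
      have n3r : ¬ occ (v3r i) := by
        intro hc
        have := (hOA _ (adj3r i)).mp hc
        simp only [Set.mem_insert_iff, Set.mem_singleton_iff, v3r, v2l, v2r,
          Prod.mk.injEq] at this
        omega
      have n4 : ¬ occ (v4 i) := by
        intro hc
        have := (hOA _ (adj4 i)).mp hc
        simp only [Set.mem_insert_iff, Set.mem_singleton_iff, v4, v2l, v2r,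
          Prod.mk.injEq] at this
        omega
      have hE : ¬ Extreme occ i := fun he => (he.2 (Or.inl o2r)).1 o2l
      have hNE : NonExtreme occ i := ⟨hE, o2r, o2l, n3r, n3l, n4⟩
      have hnR : ¬ DownslantRight occ i := fun hc => hE hc.1
      have hnL : ¬ DownslantLeft occ i := fun hc => hE hc.1
      refine ⟨Or.inr (Or.inr (Or.inr hNE)), ?_⟩
      simp [targetII, target, hnR, hnL, hnRII, hnLII]
  · -- Downslant-Right-II
    have o2r : occ (v2r i) := (hR _ (adj2r i)).mpr rfl
    have n1 : ¬ occ (v1 i) := by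
      intro hc
      have := (hR _ (adj1 i)).mp hc
      simp only [Set.mem_singleton_iff, v1, v2r, Prod.mk.injEq] at this; omega
    have n2l : ¬ occ (v2l i) := by
      intro hc
      have := (hR _ (adj2l i)).mp hc
      simp only [Set.mem_singleton_iff, v2l, v2r, Prod.mk.injEq] at this; omega
    have n3l : ¬ occ (v3l i) := by
      intro hc
      have := (hR _ (adj3l i)).mp hc
      simp only [Set.mem_singleton_iff, v3l, v2r, Prod.mk.injEq] at this; omega
    have n3r : ¬ occ (v3r i) := by
      intro hc
      have := (hR _ (adj3r i)).mp hc
      simp only [Set.mem_singleton_iff, v3r, v2r, Prod.mk.injEq] at this; omega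
    have n4 : ¬ occ (v4 i) := by
      intro hc
      have := (hR _ (adj4 i)).mp hc
      simp only [Set.mem_singleton_iff, v4, v2r, Prod.mk.injEq] at this; omega
    have hExt : Extreme occ i := ⟨n4, fun _ => ⟨n2l, n3l⟩⟩
    have hnSt : ¬ Staying occ i := by
      rintro ⟨-, hS | hS | hS | hS⟩ <;>
      · have := (hS _ (adj2r i)).mp o2r
        simp only [Set.mem_insert_iff, Set.mem_singleton_iff, v1, v2r, v3r, v3l,
          Prod.mk.injEq] at this
        omega
    have hDSR : DownslantRight occ i :=
      ⟨hExt, fun hd => n1 hd.2.1, hnSt, fun ht => ht.2 _ (adj2r i) o2r, o2r⟩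
    refine ⟨Or.inr (Or.inl hDSR), ?_⟩
    simp [targetII, target, hR, hDSR]
  · -- Downslant-Left-II
    have o2l : occ (v2l i) := (hL _ (adj2l i)).mpr rfl
    have n1 : ¬ occ (v1 i) := by
      intro hc
      have := (hL _ (adj1 i)).mp hc
      simp only [Set.mem_singleton_iff, v1, v2l, Prod.mk.injEq] at this; omega
    have n2r : ¬ occ (v2r i) := by
      intro hc
      have := (hL _ (adj2r i)).mp hc
      simp only [Set.mem_singleton_iff, v2r, v2l, Prod.mk.injEq] at this; omega
    have n3l : ¬ occ (v3l i) := by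
      intro hc
      have := (hL _ (adj3l i)).mp hc
      simp only [Set.mem_singleton_iff, v3l, v2l, Prod.mk.injEq] at this; omega
    have n3r : ¬ occ (v3r i) := by
      intro hc
      have := (hL _ (adj3r i)).mp hc
      simp only [Set.mem_singleton_iff, v3r, v2l, Prod.mk.injEq] at this; omega
    have n4 : ¬ occ (v4 i) := by
      intro hc
      have := (hL _ (adj4 i)).mp hc
      simp only [Set.mem_singleton_iff, v4, v2l, Prod.mk.injEq] at this; omega
    have hExt : Extreme occ i := ⟨n4, fun hp => ((hp.elim n2r n3r)).elim⟩
    have hnSt : ¬ Staying occ i := by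
      rintro ⟨-, hS | hS | hS | hS⟩ <;>
      · have := (hS _ (adj2l i)).mp o2l
        simp only [Set.mem_insert_iff, Set.mem_singleton_iff, v1, v2l, v3r, v3l,
          Prod.mk.injEq] at this
        omega
    have hDSL : DownslantLeft occ i :=
      ⟨hExt, fun hd => n1 hd.2.1, hnSt, fun ht => ht.2 _ (adj2l i) o2l, o2l⟩
    have hnRII : ¬ DownslantRightII occ i := by
      intro hc
      have := (hc _ (adj2l i)).mp o2l
      simp only [Set.mem_singleton_iff, v2l, v2r, Prod.mk.injEq] at this; omega
    have hnR : ¬ DownslantRight occ i := fun hc => n2r hc.2.2.2.2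
    refine ⟨Or.inr (Or.inr (Or.inl hDSL)), ?_⟩
    simp [targetII, target, hL, hDSL, hnRII, hnR]

end GSGS
end
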